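/- arXiv:2103.15291 — 2 statements merged into one kernel-verified Lean document; each statement's English description precedes it below -/
import Mathlib

section
/- For integers n ≥ 2 and k, the 2-Stirling transform of poly-Cauchy numbers satisfies ∑_{j=2}^{n} S_2(n,j) · c_j^{(k)} = -1/n^k + 1/(n+1)^k. -/
open Finset

/-- Unsigned Stirling numbers of the first kind. -/
def stirling1 : ℕ → ℕ → ℕ
  | 0, 0 => 1
  | 0, _ + 1 => 0
  | _ + 1, 0 => 0
  | n + 1, k + 1 => n * stirling1 n (k + 1) + stirling1 n k

/-- Stirling numbers of the second kind. -/
def stirling2 : ℕ → ℕ → ℕ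
  | 0, 0 => 1
  | 0, _ + 1 => 0
  | _ + 1, 0 => 0
  | n + 1, k + 1 => (k + 1) * stirling2 n (k + 1) + stirling2 n k

/-- Unsigned r-Stirling numbers of the first kind. -/
def rStirling1 (r : ℕ) : ℕ → ℕ → ℕ
  | 0, m => if r = 0 ∧ m = 0 then 1 else 0
  | n + 1, m =>
    if n + 1 < r then 0
    else if n + 1 = r then (if m = r then 1 else 0)
    else n * rStirling1 r n m + (match m with | 0 => 0 | m' + 1 => rStirling1 r n m')

/-- r-Stirling numbers of the second kind. -/
def rStirling2 (r : ℕ) : ℕ → ℕ → ℕ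
  | 0, m => if r = 0 ∧ m = 0 then 1 else 0
  | n + 1, m =>
    if n + 1 < r then 0
    else if n + 1 = r then (if m = r then 1 else 0)
    else m * rStirling2 r n m + (match m with | 0 => 0 | m' + 1 => rStirling2 r n m')

/-- Poly-Cauchy numbers of the first kind `c_n^{(k)}`. -/
noncomputable def polyCauchy (k : ℤ) (n : ℕ) : ℝ :=
  ∑ ℓ ∈ range (n + 1), (-1 : ℝ) ^ (n - ℓ) * stirling1 n ℓ / ((ℓ : ℝ) + 1) ^ k

/-- Poly-Cauchy numbers of the second kind `ĉ_n^{(k)}`. -/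
noncomputable def polyCauchy2 (k : ℤ) (n : ℕ) : ℝ :=
  (-1 : ℝ) ^ n * ∑ ℓ ∈ range (n + 1), (stirling1 n ℓ : ℝ) / ((ℓ : ℝ) + 1) ^ k

/-- Poly-Cauchy polynomials of the first kind `c_n^{(k)}(z)`. -/
noncomputable def polyCauchyPoly (k : ℤ) (n : ℕ) (z : ℝ) : ℝ :=
  ∑ m ∈ range (n + 1), (stirling1 n m : ℝ) * (-1 : ℝ) ^ (n - m) *
    ∑ i ∈ range (m + 1), (m.choose i : ℝ) * z ^ (m - i) / ((i : ℝ) + 1) ^ k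

/-- Shifted poly-Cauchy numbers of the first kind `c_{n,α}^{(k)}`. -/
noncomputable def shiftedPolyCauchy (k : ℤ) (n : ℕ) (α : ℝ) : ℝ :=
  ∑ m ∈ range (n + 1), (stirling1 n m : ℝ) * (-1 : ℝ) ^ (n - m) / ((m : ℝ) + α) ^ k

/-- Shifted poly-Cauchy numbers of the second kind `ĉ_{n,α}^{(k)}`. -/
noncomputable def shiftedPolyCauchy2 (k : ℤ) (n : ℕ) (α : ℝ) : ℝ :=
  (-1 : ℝ) ^ n * ∑ m ∈ range (n + 1), (stirling1 n m : ℝ) / ((m : ℝ) + α) ^ k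

/-! The falling factorial `(x)_j = descPochhammer ℝ j` has coefficients `(-1)^(j-ℓ) s(j,ℓ)`, so
`c_j^{(k)} = L (x)_j` for the linear functional `L : x^ℓ ↦ 1/(ℓ+1)^k`. Since
`x (x)_m = (x)_{m+1} + m (x)_m`, the recurrence of the `r`-Stirling numbers gives
`∑_m S_r(n,m) (x)_m = (x)_r x^{n-r}`; for `r = 2` this is `x^n - x^{n-1}`, and applying `L` gives
`1/(n+1)^k - 1/n^k`. -/

open Polynomial

theorem stirling1_eq_stirlingFirst : stirling1 = Nat.stirlingFirst := by
  funext n k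
  induction n generalizing k with
  | zero => cases k <;> rfl
  | succ n ih => cases k <;> simp [stirling1, Nat.stirlingFirst, ih]

-- `(-1)^(j+ℓ)` agrees with `(-1)^(j-ℓ)` for `ℓ ≤ j` and avoids truncated subtraction.
theorem coeff_descPochhammer {R : Type*} [CommRing R] (j ℓ : ℕ) :
    (descPochhammer R j).coeff ℓ = (-1) ^ (j + ℓ) * stirling1 j ℓ := by
  rw [stirling1_eq_stirlingFirst]
  induction j generalizing ℓ with
  | zero => cases ℓ <;> simp [coeff_one]
  | succ j ih =>
    rw [descPochhammer_succ_right, ← map_natCast C]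
    cases ℓ with
    | zero =>
      rcases j with _ | j <;> simp [mul_coeff_zero, ih]
    | succ ℓ =>
      rw [coeff_mul_X_sub_C, ih, ih, Nat.stirlingFirst_succ_succ]
      push_cast
      ring

section rStirling2

variable {r n m : ℕ}

theorem rStirling2_eq_zero_of_lt_r (h : n < r) : rStirling2 r n m = 0 := by
  cases n with
  | zero => simp [rStirling2, Nat.pos_iff_ne_zero.mp h]
  | succ n => simp [rStirling2, h]

theorem rStirling2_self : rStirling2 r r m = if m = r then 1 else 0 := by
  cases r with
  | zero => simp [rStirling2]
  | succ r => simp [rStirling2]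

theorem rStirling2_succ_zero (h : r ≤ n) : rStirling2 r (n + 1) 0 = 0 := by
  simp [rStirling2, show ¬n + 1 < r by omega, show n + 1 ≠ r by omega]

theorem rStirling2_succ_succ (h : r ≤ n) (m : ℕ) :
    rStirling2 r (n + 1) (m + 1) = (m + 1) * rStirling2 r n (m + 1) + rStirling2 r n m := by
  simp [rStirling2, show ¬n + 1 < r by omega, show n + 1 ≠ r by omega]

theorem rStirling2_eq_zero_of_lt (h : n < m) : rStirling2 r n m = 0 := by
  rcases lt_or_ge n r with hnr | hrn
  · exact rStirling2_eq_zero_of_lt_r hnr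
  induction n, hrn using Nat.le_induction generalizing m with
  | base => simp [rStirling2_self, h.ne']
  | succ n hrn ih =>
    obtain ⟨m, rfl⟩ : ∃ m', m = m' + 1 := ⟨m - 1, by omega⟩
    rw [rStirling2_succ_succ hrn, ih (by omega), ih (by omega), mul_zero]

theorem rStirling2_eq_zero_of_blocks_lt (h : m < r) : rStirling2 r n m = 0 := by
  rcases lt_or_ge n r with hnr | hrn
  · exact rStirling2_eq_zero_of_lt_r hnr
  induction n, hrn using Nat.le_induction generalizing m with
  | base => simp [rStirling2_self, h.ne]
  | succ n hrn ih =>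
    cases m with
    | zero => exact rStirling2_succ_zero hrn
    | succ m => rw [rStirling2_succ_succ hrn, ih h, ih (by omega), mul_zero]

end rStirling2

theorem descPochhammer_mul_X {R : Type*} [CommRing R] (m : ℕ) :
    descPochhammer R m * X = descPochhammer R (m + 1) + (m : R[X]) * descPochhammer R m := by
  rw [descPochhammer_succ_right]
  ring

theorem sum_rStirling2_mul_descPochhammer {R : Type*} [CommRing R] {r n : ℕ} (h : r ≤ n) :
    ∑ m ∈ range (n + 1), (rStirling2 r n m : R[X]) * descPochhammer R m =
      descPochhammer R r * X ^ (n - r) := by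
  induction n, h using Nat.le_induction with
  | base => simp [rStirling2_self]
  | succ n hrn ih =>
    have hshift : ∑ m ∈ range (n + 1),
        ((m + 1 : ℕ) : R[X]) * rStirling2 r n (m + 1) * descPochhammer R (m + 1) =
          ∑ m ∈ range (n + 1), (m : R[X]) * rStirling2 r n m * descPochhammer R m := by
      have h := sum_range_succ' (fun m : ℕ =>
        (m : R[X]) * rStirling2 r n m * descPochhammer R m) (n + 1)
      rw [sum_range_succ, rStirling2_eq_zero_of_lt (Nat.lt_succ_self n)] at h
      simpa using h.symm
    calc ∑ m ∈ range (n + 1 + 1), (rStirling2 r (n + 1) m : R[X]) * descPochhammer R m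
        = ∑ m ∈ range (n + 1), (((m + 1 : ℕ) : R[X]) * rStirling2 r n (m + 1) *
            descPochhammer R (m + 1) + rStirling2 r n m * descPochhammer R (m + 1)) := by
          rw [sum_range_succ', rStirling2_succ_zero hrn]
          simp only [rStirling2_succ_succ hrn]
          push_cast
          simp only [zero_mul, add_zero]
          refine sum_congr rfl fun m _ => by ring
      _ = ∑ m ∈ range (n + 1), (rStirling2 r n m : R[X]) * (descPochhammer R m * X) := by
          rw [sum_add_distrib, hshift, ← sum_add_distrib]
          refine sum_congr rfl fun m _ => by rw [descPochhammer_mul_X]; ring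
      _ = descPochhammer R r * X ^ (n + 1 - r) := by
          rw [Nat.sub_add_comm hrn, pow_succ, ← mul_assoc, ← ih, sum_mul]
          refine sum_congr rfl fun m _ => by ring

noncomputable def momentFunctional {R : Type*} [CommSemiring R] (μ : ℕ → R) : R[X] →ₗ[R] R :=
  lsum fun ℓ => μ ℓ • LinearMap.id

section momentFunctional

variable {R : Type*} [CommSemiring R] (μ : ℕ → R)

theorem momentFunctional_apply (p : R[X]) :
    momentFunctional μ p = ∑ ℓ ∈ range (p.natDegree + 1), p.coeff ℓ * μ ℓ := by
  simp [momentFunctional, sum_over_range, mul_comm]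

theorem momentFunctional_X_pow (ℓ : ℕ) : momentFunctional μ (X ^ ℓ) = μ ℓ := by
  simp [momentFunctional, ← monomial_one_right_eq_X_pow, sum_monomial_index]

theorem momentFunctional_natCast_mul (c : ℕ) (p : R[X]) :
    momentFunctional μ ((c : R[X]) * p) = c * momentFunctional μ p := by
  rw [← C_eq_natCast, ← smul_eq_C_mul, map_smul, smul_eq_mul]

end momentFunctional

theorem polyCauchy_eq_momentFunctional (k : ℤ) (j : ℕ) :
    polyCauchy k j = momentFunctional (fun ℓ => 1 / ((ℓ : ℝ) + 1) ^ k) (descPochhammer ℝ j) := by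
  rw [momentFunctional_apply, descPochhammer_natDegree, polyCauchy]
  refine sum_congr rfl fun ℓ hℓ => ?_
  obtain ⟨d, rfl⟩ := Nat.exists_eq_add_of_le (mem_range_succ_iff.mp hℓ)
  rw [coeff_descPochhammer, Nat.add_sub_cancel_left, show ℓ + d + ℓ = d + 2 * ℓ by ring,
    pow_add, pow_mul]
  simp [div_eq_mul_inv]

theorem descPochhammer_two_mul_X_pow {R : Type*} [CommRing R] (m : ℕ) :
    descPochhammer R 2 * X ^ m = X ^ (m + 2) - X ^ (m + 1) := by
  simp only [descPochhammer_succ_right, descPochhammer_zero, Nat.cast_zero, Nat.cast_one]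
  ring

theorem stmt1 (n : ℕ) (k : ℤ) (hn : 2 ≤ n) :
    ∑ j ∈ Finset.Icc 2 n, (rStirling2 2 n j : ℝ) * polyCauchy k j =
      -1 / (n : ℝ) ^ k + 1 / ((n : ℝ) + 1) ^ k := by
  set L := momentFunctional fun ℓ => 1 / ((ℓ : ℝ) + 1) ^ k
  have hsupport : ∑ j ∈ Icc 2 n, (rStirling2 2 n j : ℝ) * polyCauchy k j =
      ∑ j ∈ range (n + 1), (rStirling2 2 n j : ℝ) * polyCauchy k j := by
    refine sum_subset (fun j hj => by simp only [mem_Icc, mem_range] at hj ⊢; omega) fun j hj hj' => ?_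
    rw [rStirling2_eq_zero_of_blocks_lt (by simp only [mem_Icc, mem_range, not_and, not_le] at hj hj'; omega), Nat.cast_zero, zero_mul]
  obtain ⟨m, rfl⟩ := Nat.exists_eq_add_of_le' hn
  calc ∑ j ∈ Icc 2 (m + 2), (rStirling2 2 (m + 2) j : ℝ) * polyCauchy k j
      = L (∑ j ∈ range (m + 2 + 1), (rStirling2 2 (m + 2) j : ℝ[X]) * descPochhammer ℝ j) := by
        rw [hsupport]
        simp only [polyCauchy_eq_momentFunctional, map_sum, L,
          momentFunctional_natCast_mul]
    _ = L (X ^ (m + 2) - X ^ (m + 1)) := by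
        rw [sum_rStirling2_mul_descPochhammer hn, Nat.add_sub_cancel, descPochhammer_two_mul_X_pow]
    _ = -1 / ((m + 2 : ℕ) : ℝ) ^ k + 1 / ((m + 2 : ℕ) + 1 : ℝ) ^ k := by
        rw [map_sub, momentFunctional_X_pow, momentFunctional_X_pow]
        push_cast
        ring_nf
end

section
/- Let 1 ≤ r ≤ n and n-r+2 ≤ m ≤ n. Then ∑_{ℓ=1}^{n+1-max(m,r)} s(r, m-n+r-1+ℓ) · s_r(n, n-ℓ+1) = s(n,m), where s(n,m) denotes unsigned Stirling numbers of the first kind and s_r the unsigned r-Stirling numbers of the first kind. -/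
open Finset

/-!
The row generating polynomials satisfy `∑ₘ s(n,m) xᵐ = x(x+1)⋯(x+n-1)` and
`∑ⱼ s_r(n,j) xʲ = xʳ (x+r)⋯(x+n-1)`, since both rows obey `P_{n+1} = (x+n) P_n`. Hence
`xʳ ∑ₘ s(n,m) xᵐ = (∑ᵢ s(r,i) xⁱ)(∑ⱼ s_r(n,j) xʲ)`, and comparing coefficients of `x^{m+r}` gives
`s(n,m) = ∑_{i+j=m+r} s(r,i) s_r(n,j)`. The sum of the theorem is this convolution reindexed by
`j = n+1-ℓ`: the terms with `j < max m r` vanish, and `m ≥ n-r+2` makes `i = m+r+ℓ-(n+1)` exact.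
-/

open Polynomial

theorem stirling1_eq_zero_of_lt {n k : ℕ} (h : n < k) : stirling1 n k = 0 := by
  induction n generalizing k with
  | zero => obtain _ | k := k <;> first | omega | rfl
  | succ n ih =>
    obtain _ | k := k
    · omega
    · rw [stirling1, ih (by omega), ih (by omega), mul_zero]

theorem stirling1_succ_zero (n : ℕ) : stirling1 (n + 1) 0 = n * stirling1 n 0 := by
  cases n <;> rfl

theorem rStirling1_self (r m : ℕ) : rStirling1 r r m = if m = r then 1 else 0 := by
  cases r <;> simp [rStirling1]

theorem rStirling1_succ_of_le {r n : ℕ} (h : r ≤ n) (m : ℕ) :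
    rStirling1 r (n + 1) m =
      n * rStirling1 r n m + (match m with | 0 => 0 | m' + 1 => rStirling1 r n m') := by
  simp only [rStirling1]
  rw [if_neg (by omega), if_neg (by omega)]

theorem rStirling1_eq_zero_of_lt {r n m : ℕ} (h : n < m) : rStirling1 r n m = 0 := by
  induction n generalizing m with
  | zero => simp only [rStirling1, ite_eq_right_iff]; omega
  | succ n ih =>
    rcases lt_or_ge n r with hnr | hrn
    · simp only [rStirling1]; split_ifs <;> omega
    · rw [rStirling1_succ_of_le hrn]
      obtain _ | m := m
      · omega
      · simp only [ih (by omega : n < m + 1), ih (by omega : n < m), mul_zero]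

theorem rStirling1_eq_zero_of_lt_left {r n m : ℕ} (h : m < r) : rStirling1 r n m = 0 := by
  induction n generalizing m with
  | zero => simp only [rStirling1, ite_eq_right_iff]; omega
  | succ n ih =>
    rcases lt_or_ge n r with hnr | hrn
    · simp only [rStirling1]; split_ifs <;> omega
    · rw [rStirling1_succ_of_le hrn]
      obtain _ | m := m
      · simp only [ih h, mul_zero]
      · simp only [ih h, ih (by omega : m < r), mul_zero]

noncomputable def rowPoly (f : ℕ → ℕ) (n : ℕ) : ℕ[X] :=
  ∑ k ∈ range (n + 1), monomial k (f k)

theorem coeff_rowPoly {f : ℕ → ℕ} {n : ℕ} (hf : ∀ k, n < k → f k = 0) (k : ℕ) :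
    (rowPoly f n).coeff k = f k := by
  simp only [rowPoly, finsetSum_coeff, coeff_monomial, sum_ite_eq', mem_range]
  split_ifs with hk
  · rfl
  · exact (hf k (by omega)).symm

theorem rowPoly_succ {f g : ℕ → ℕ} {n : ℕ} (hf : ∀ k, n < k → f k = 0)
    (hg_zero : g 0 = n * f 0) (hg_succ : ∀ k, g (k + 1) = n * f (k + 1) + f k) :
    rowPoly g (n + 1) = (X + C n) * rowPoly f n := by
  have hg : ∀ k, n + 1 < k → g k = 0 := by
    rintro (_ | k) hk
    · omega
    · rw [hg_succ, hf _ (by omega), hf _ (by omega), mul_zero]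
  ext (_ | k)
  · rw [coeff_rowPoly hg, add_mul, coeff_add, coeff_X_mul_zero, coeff_C_mul, coeff_rowPoly hf,
      hg_zero, zero_add]
  · rw [coeff_rowPoly hg, add_mul, coeff_add, coeff_X_mul, coeff_C_mul, coeff_rowPoly hf,
      coeff_rowPoly hf, hg_succ, add_comm]

theorem rowPoly_stirling1_succ (n : ℕ) :
    rowPoly (stirling1 (n + 1)) (n + 1) = (X + C n) * rowPoly (stirling1 n) n :=
  rowPoly_succ (fun _ => stirling1_eq_zero_of_lt) (stirling1_succ_zero n) fun _ => rfl

theorem rowPoly_rStirling1_succ {r n : ℕ} (h : r ≤ n) :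
    rowPoly (rStirling1 r (n + 1)) (n + 1) = (X + C n) * rowPoly (rStirling1 r n) n :=
  rowPoly_succ (fun _ => rStirling1_eq_zero_of_lt) (by rw [rStirling1_succ_of_le h, add_zero])
    fun k => rStirling1_succ_of_le h (k + 1)

theorem rowPoly_rStirling1_self (r : ℕ) : rowPoly (rStirling1 r r) r = X ^ r := by
  ext k
  rw [coeff_rowPoly (fun _ => rStirling1_eq_zero_of_lt), rStirling1_self, coeff_X_pow]

theorem X_pow_mul_rowPoly_stirling1 {r n : ℕ} (h : r ≤ n) :
    X ^ r * rowPoly (stirling1 n) n = rowPoly (stirling1 r) r * rowPoly (rStirling1 r n) n := by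
  induction n, h using Nat.le_induction with
  | base => rw [rowPoly_rStirling1_self, mul_comm]
  | succ n h ih => rw [rowPoly_stirling1_succ, rowPoly_rStirling1_succ h, mul_left_comm, ih]; ring

theorem sum_antidiagonal_stirling1_mul_rStirling1 {r n : ℕ} (h : r ≤ n) (m : ℕ) :
    ∑ p ∈ antidiagonal (m + r), stirling1 r p.1 * rStirling1 r n p.2 = stirling1 n m := by
  have := congrArg (coeff · (m + r)) (X_pow_mul_rowPoly_stirling1 h)
  rw [coeff_X_pow_mul', if_pos le_add_self, Nat.add_sub_cancel, coeff_mul,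
    coeff_rowPoly fun _ => stirling1_eq_zero_of_lt] at this
  simp only [this, coeff_rowPoly fun _ => stirling1_eq_zero_of_lt,
    coeff_rowPoly fun _ => rStirling1_eq_zero_of_lt]

theorem stmt9_general (n r m : ℕ) (hn : r ≤ n) (hm : n - r + 2 ≤ m) :
    ∑ ℓ ∈ Finset.Icc 1 (n + 1 - max m r),
        stirling1 r (m + r + ℓ - (n + 1)) * rStirling1 r n (n + 1 - ℓ) =
      stirling1 n m := by
  rw [← sum_antidiagonal_stirling1_mul_rStirling1 hn m]
  refine sum_bij_ne_zero (fun ℓ _ _ => (m + r + ℓ - (n + 1), n + 1 - ℓ)) ?_ ?_ ?_ fun _ _ _ => rfl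
  · intro ℓ hℓ _
    rw [mem_Icc] at hℓ
    rw [HasAntidiagonal.mem_antidiagonal]
    omega
  · intro ℓ₁ hℓ₁ _ ℓ₂ hℓ₂ _ heq
    rw [mem_Icc] at hℓ₁ hℓ₂
    simp only [Prod.mk.injEq] at heq
    omega
  · rintro ⟨i, j⟩ hij hne
    rw [HasAntidiagonal.mem_antidiagonal] at hij
    have hi : i ≤ r := not_lt.1 (mt stirling1_eq_zero_of_lt (left_ne_zero_of_mul hne))
    have hjn : j ≤ n := not_lt.1 (mt rStirling1_eq_zero_of_lt (right_ne_zero_of_mul hne))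
    have hrj : r ≤ j := not_lt.1 (mt rStirling1_eq_zero_of_lt_left (right_ne_zero_of_mul hne))
    refine ⟨n + 1 - j, mem_Icc.2 ⟨by omega, by omega⟩, ?_, ?_⟩
    · rwa [show m + r + (n + 1 - j) - (n + 1) = i by omega, show n + 1 - (n + 1 - j) = j by omega]
    · simp only [Prod.mk.injEq]
      omega

theorem stmt9 (n r m : ℕ) (hr : 1 ≤ r) (hn : r ≤ n) (hm : n - r + 2 ≤ m)
    (hm' : m ≤ n) :
    ∑ ℓ ∈ Finset.Icc 1 (n + 1 - max m r),
        stirling1 r (m + r + ℓ - (n + 1)) * rStirling1 r n (n + 1 - ℓ) =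
      stirling1 n m :=
  stmt9_general n r m hn hm
end
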